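/- arXiv:2208.01986 — 3 statements merged into one kernel-verified Lean document; each statement's English description precedes it below -/
import Mathlib

section
/- Spec_S R is a noetherian topological space with respect to the S-Zariski topology if and only if R satisfies the ascending chain condition on S-radical ideals (ideals I with I = √[S](I)). -/
/-- An ideal `P` is `S`-prime if `P ∩ S = ∅` and there is `s ∈ S` such that
whenever `a * b ∈ P`, either `s * a ∈ P` or `s * b ∈ P`. -/
def IsSPrime {R : Type*} [CommRing R] (S : Set R) (P : Ideal R) : Prop :=
  (P : Set R) ∩ S = ∅ ∧ ∃ s ∈ S, ∀ a b : R, a * b ∈ P → s * a ∈ P ∨ s * b ∈ P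

/-- The `S`-prime spectrum `Spec_S R`: the set of all `S`-prime ideals of `R`. -/
def SSpec {R : Type*} [CommRing R] (S : Set R) : Type _ :=
  {P : Ideal R // IsSPrime S P}

/-- The `S`-variety of an ideal `I`:
`V_S(I) = {P ∈ Spec_S R | s • I ⊆ P for some s ∈ S}`. -/
def SVar {R : Type*} [CommRing R] (S : Set R) (I : Ideal R) : Set (SSpec S) :=
  {P | ∃ s ∈ S, ∀ x ∈ I, s * x ∈ P.1}

/-- The `S`-radical of an ideal `I`:
`√[S](I) = {a ∈ R | s * a ^ n ∈ I for some s ∈ S, n ∈ ℕ}`. -/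
def SRad {R : Type*} [CommRing R] (S : Set R) (I : Ideal R) : Set R :=
  {a | ∃ s ∈ S, ∃ n : ℕ, s * a ^ n ∈ I}

/-- The `S`-Zariski topology on `Spec_S R`: the closed sets are exactly the `V_S(I)`. -/
def sZariskiTop {R : Type*} [CommRing R] (S : Set R) : TopologicalSpace (SSpec S) :=
  TopologicalSpace.generateFrom {U | ∃ I : Ideal R, U = (SVar S I)ᶜ}

/-- The `S`-flat topology on `Spec_S R`: the coarsest topology in which every
`V_S(f)`, `f ∈ R`, is open. -/
def sFlatTop {R : Type*} [CommRing R] (S : Set R) : TopologicalSpace (SSpec S) :=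
  TopologicalSpace.generateFrom {U | ∃ f : R, U = SVar S (Ideal.span {f})}

/-- An ideal `I` is `S`-radically finite if `√[S](I) = √[S](J)` for some finitely
generated ideal `J`. -/
def SRadFinite {R : Type*} [CommRing R] (S : Set R) (I : Ideal R) : Prop :=
  ∃ J : Ideal R, J.FG ∧ SRad S I = SRad S J

/-!
Every `S`-prime ideal `Q`, with witness `t`, has a prime core `(Q : t)` disjoint from `S` such
that `Q ∈ V_S(I)` iff `I ⊆ (Q : t)`; conversely every prime ideal disjoint from `S` is `S`-prime.
Hence the sets `V_S(I)` are closed under finite unions and arbitrary intersections, so the open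
sets are exactly the complements of the `V_S(I)`. Since `√[S](I)` is the intersection of the prime
ideals containing `I` and disjoint from `S`, `V_S(I) ⊆ V_S(J)` iff `√[S](J) ⊆ √[S](I)`. Therefore
`I ↦ Spec_S R \ V_S(I)` is an order isomorphism from the `S`-radical ideals onto the open sets,
and the two ascending chain conditions correspond.
-/

open TopologicalSpace

def IsSRadical {R : Type*} [CommRing R] (S : Set R) (I : Ideal R) : Prop :=
  (I : Set R) = SRad S I

theorem wellFoundedGT_subtype_iff_monotone_chain_condition {α : Type*} [PartialOrder α]
    (P : α → Prop) :
    WellFoundedGT {a // P a} ↔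
      ∀ c : ℕ →o α, (∀ n, P (c n)) → ∃ N, ∀ n, N ≤ n → c n = c N := by
  rw [wellFoundedGT_iff_monotone_chain_condition]
  constructor
  · intro h c hc
    obtain ⟨N, hN⟩ := h ⟨fun n => ⟨c n, hc n⟩, fun _ _ hmn => c.mono hmn⟩
    exact ⟨N, fun n hn => congrArg Subtype.val (hN n hn).symm⟩
  · intro h c
    obtain ⟨N, hN⟩ := h ((OrderHom.Subtype.val P).comp c) fun n => (c n).2
    exact ⟨N, fun n hn => Subtype.ext (hN n hn).symm⟩

section SZariski

variable {R : Type*} [CommRing R] {S : Submonoid R}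

theorem isSPrime_of_isPrime {p : Ideal R} (hp : p.IsPrime) (hpS : Disjoint (p : Set R) S) :
    IsSPrime S p :=
  ⟨Set.disjoint_iff_inter_eq_empty.mp hpS, 1, S.one_mem, fun a b hab => by
    simpa using hp.mem_or_mem hab⟩

theorem Ideal.IsPrime.mem_of_mul_mem_of_disjoint {p : Ideal R} (hp : p.IsPrime)
    (hpS : Disjoint (p : Set R) S) {s a : R} (hs : s ∈ S) (h : s * a ∈ p) : a ∈ p :=
  (hp.mem_or_mem h).resolve_left (Set.disjoint_right.mp hpS hs)

theorem mem_SVar_iff_le_of_isPrime {p : Ideal R} (hp : p.IsPrime) (hpS : Disjoint (p : Set R) S)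
    (I : Ideal R) : (⟨p, isSPrime_of_isPrime hp hpS⟩ : SSpec (S : Set R)) ∈ SVar S I ↔ I ≤ p :=
  ⟨fun ⟨_, hs, h⟩ _ hx => hp.mem_of_mul_mem_of_disjoint hpS hs (h _ hx),
    fun h => ⟨1, S.one_mem, fun x hx => by simpa using h hx⟩⟩

theorem SSpec.exists_isPrime_mem_SVar_iff (Q : SSpec (S : Set R)) :
    ∃ p : Ideal R, p.IsPrime ∧ Disjoint (p : Set R) S ∧ ∀ I, Q ∈ SVar S I ↔ I ≤ p := by
  obtain ⟨P, hPS, t, ht, hPt⟩ := Q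
  have notMem : ∀ s ∈ S, s ∉ P := fun s hs h =>
    Set.eq_empty_iff_forall_notMem.mp hPS s ⟨h, hs⟩
  have cancel : ∀ s ∈ S, ∀ x, x * s ∈ P → t * x ∈ P := fun s hs x h =>
    (hPt x s h).resolve_right (notMem _ (S.mul_mem ht hs))
  refine ⟨P.colon {t}, ⟨?_, fun {a b} hab => ?_⟩, ?_, fun I => ⟨?_, ?_⟩⟩
  · exact (Ideal.ne_top_iff_one _).mpr fun h => notMem t ht (by simpa using h)
  · simp only [Submodule.mem_colon_singleton, smul_eq_mul] at hab ⊢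
    rcases hPt (a * t) b (by rwa [mul_right_comm]) with h | h
    · left
      rw [mul_comm]
      exact cancel (t * t) (S.mul_mem ht ht) a (by convert h using 1; ring)
    · exact .inr (by rwa [mul_comm])
  · refine Set.disjoint_left.mpr fun s hs hsS => notMem _ (S.mul_mem hsS ht) ?_
    simpa using hs
  · rintro ⟨s, hs, h⟩ x hx
    simpa [mul_comm] using cancel s hs x (by rw [mul_comm]; exact h x hx)
  · exact fun h => ⟨t, ht, fun x hx => by simpa [mul_comm] using h hx⟩

/-- The ideal `√[S](I)`, presented as `{a | s * a ∈ √I for some s ∈ S}` (see `coe_sRadical`),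
which makes the ideal axioms immediate. -/
def sRadical (S : Submonoid R) (I : Ideal R) : Ideal R where
  carrier := {a | ∃ s ∈ S, s * a ∈ I.radical}
  zero_mem' := ⟨1, S.one_mem, by simp⟩
  add_mem' := by
    rintro a b ⟨s, hs, ha⟩ ⟨t, ht, hb⟩
    refine ⟨s * t, S.mul_mem hs ht, ?_⟩
    rw [show s * t * (a + b) = t * (s * a) + s * (t * b) by ring]
    exact add_mem (I.radical.mul_mem_left t ha) (I.radical.mul_mem_left s hb)
  smul_mem' := by
    rintro c a ⟨s, hs, ha⟩
    exact ⟨s, hs, by simpa [mul_left_comm] using I.radical.mul_mem_left c ha⟩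

theorem coe_sRadical (I : Ideal R) : (sRadical S I : Set R) = SRad S I := by
  ext a
  constructor
  · rintro ⟨s, hs, n, hn⟩
    exact ⟨s ^ n, pow_mem hs n, n, by rwa [← mul_pow]⟩
  · rintro ⟨s, hs, n, h⟩
    refine ⟨s, hs, n + 1, ?_⟩
    rw [show (s * a) ^ (n + 1) = s ^ n * a * (s * a ^ n) by ring]
    exact I.mul_mem_left _ h

theorem le_sRadical (I : Ideal R) : I ≤ sRadical S I :=
  fun a ha => ⟨1, S.one_mem, by simpa using Ideal.le_radical ha⟩

theorem sRadical_le_iff_of_isPrime {p : Ideal R} (hp : p.IsPrime) (hpS : Disjoint (p : Set R) S)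
    (I : Ideal R) : sRadical S I ≤ p ↔ I ≤ p :=
  ⟨(le_sRadical I).trans, fun h _ ⟨_, hs, ha⟩ =>
    hp.mem_of_mul_mem_of_disjoint hpS hs (hp.radical_le_iff.mpr h ha)⟩

theorem exists_isPrime_of_notMem_sRadical {I : Ideal R} {a : R} (ha : a ∉ sRadical S I) :
    ∃ p : Ideal R, p.IsPrime ∧ Disjoint (p : Set R) S ∧ I ≤ p ∧ a ∉ p := by
  have hdisj : Disjoint (I : Set R) (S ⊔ Submonoid.powers a : Submonoid R) := by
    refine Set.disjoint_right.mpr fun x hx hxI => ha ?_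
    obtain ⟨s, hs, _, ⟨n, rfl⟩, rfl⟩ := Submonoid.mem_sup.mp hx
    rw [← SetLike.mem_coe, coe_sRadical]
    exact ⟨s, hs, n, hxI⟩
  obtain ⟨p, hp, hIp, hpT⟩ := I.exists_le_prime_disjoint _ hdisj
  exact ⟨p, hp, hpT.mono_right (SetLike.coe_subset_coe.mpr le_sup_left), hIp,
    fun hap => Set.disjoint_left.mp hpT hap (le_sup_right (a := S) (Submonoid.mem_powers a))⟩

theorem sRadical_sRadical (I : Ideal R) : sRadical S (sRadical S I) = sRadical S I := by
  refine le_antisymm (fun a ha => ?_) (le_sRadical _)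
  by_contra hna
  obtain ⟨p, hp, hpS, hIp, hap⟩ := exists_isPrime_of_notMem_sRadical hna
  have hIp' := (sRadical_le_iff_of_isPrime hp hpS I).mpr hIp
  exact hap ((sRadical_le_iff_of_isPrime hp hpS _).mpr hIp' ha)

theorem isSRadical_iff {I : Ideal R} : IsSRadical S I ↔ sRadical S I = I := by
  rw [IsSRadical, ← coe_sRadical, SetLike.coe_set_eq, eq_comm]

theorem SVar_anti {I J : Ideal R} (h : I ≤ J) : SVar S J ⊆ SVar S I :=
  fun _ ⟨s, hs, hJ⟩ => ⟨s, hs, fun x hx => hJ x (h hx)⟩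

theorem SVar_top : SVar S (⊤ : Ideal R) = ∅ := by
  ext Q
  obtain ⟨p, hp, -, hQ⟩ := Q.exists_isPrime_mem_SVar_iff
  simp only [hQ, top_le_iff, hp.ne_top, Set.mem_empty_iff_false]

theorem SVar_mul (I J : Ideal R) : SVar S (I * J) = SVar S I ∪ SVar S J := by
  ext Q
  obtain ⟨p, hp, -, hQ⟩ := Q.exists_isPrime_mem_SVar_iff
  rw [Set.mem_union, hQ, hQ, hQ, hp.mul_le]

theorem SVar_iSup {ι : Sort*} (I : ι → Ideal R) : SVar S (⨆ i, I i) = ⋂ i, SVar S (I i) := by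
  ext Q
  obtain ⟨p, -, -, hQ⟩ := Q.exists_isPrime_mem_SVar_iff
  simp only [Set.mem_iInter, hQ, iSup_le_iff]

theorem SVar_sRadical (I : Ideal R) : SVar S (sRadical S I) = SVar S I := by
  ext Q
  obtain ⟨p, hp, hpS, hQ⟩ := Q.exists_isPrime_mem_SVar_iff
  rw [hQ, hQ, sRadical_le_iff_of_isPrime hp hpS]

theorem SVar_subset_SVar_iff {I J : Ideal R} :
    SVar S I ⊆ SVar S J ↔ sRadical S J ≤ sRadical S I := by
  refine ⟨fun h a ha => ?_, fun h => ?_⟩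
  · by_contra hna
    obtain ⟨p, hp, hpS, hIp, hap⟩ := exists_isPrime_of_notMem_sRadical hna
    have hJp := (mem_SVar_iff_le_of_isPrime hp hpS J).mp
      (h ((mem_SVar_iff_le_of_isPrime hp hpS I).mpr hIp))
    exact hap ((sRadical_le_iff_of_isPrime hp hpS J).mpr hJp ha)
  · rw [← SVar_sRadical I, ← SVar_sRadical J]
    exact SVar_anti h

attribute [local instance] sZariskiTop

theorem isOpen_iff_eq_compl_SVar {U : Set (SSpec (S : Set R))} :
    IsOpen U ↔ ∃ I : Ideal R, U = (SVar S I)ᶜ := by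
  refine ⟨fun h => ?_, fun ⟨I, hI⟩ => .basic _ ⟨I, hI⟩⟩
  induction h with
  | basic U hU => exact hU
  | univ => exact ⟨⊤, by rw [SVar_top, Set.compl_empty]⟩
  | inter U V _ _ ihU ihV =>
    obtain ⟨I, rfl⟩ := ihU
    obtain ⟨J, rfl⟩ := ihV
    exact ⟨I * J, by rw [SVar_mul, Set.compl_union]⟩
  | sUnion 𝒰 _ ih =>
    choose I hI using ih
    refine ⟨⨆ U : 𝒰, I U.1 U.2, ?_⟩
    rw [SVar_iSup, Set.compl_iInter, Set.sUnion_eq_iUnion]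
    exact Set.iUnion_congr fun U => hI U.1 U.2

variable (S) in
noncomputable def sRadicalOrderIsoOpens :
    {I : Ideal R // IsSRadical S I} ≃o Opens (SSpec (S : Set R)) :=
  OrderIso.ofSurjective
    (OrderEmbedding.ofMapLEIff
      (fun I => ⟨(SVar S I.1)ᶜ, isOpen_iff_eq_compl_SVar.mpr ⟨I.1, rfl⟩⟩) fun I J => by
        change (SVar S I.1)ᶜ ⊆ (SVar S J.1)ᶜ ↔ I.1 ≤ J.1
        rw [Set.compl_subset_compl, SVar_subset_SVar_iff, isSRadical_iff.mp I.2,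
          isSRadical_iff.mp J.2])
    fun U => by
      obtain ⟨I, hI⟩ := isOpen_iff_eq_compl_SVar.mp U.isOpen
      refine ⟨⟨sRadical S I, isSRadical_iff.mpr (sRadical_sRadical I)⟩, Opens.ext ?_⟩
      change (SVar S (sRadical S I))ᶜ = U
      rw [SVar_sRadical, hI]

theorem noetherianSpace_iff_wellFoundedGT_isSRadical :
    NoetherianSpace (SSpec (S : Set R)) ↔ WellFoundedGT {I : Ideal R // IsSRadical S I} :=
  ⟨fun _ => (sRadicalOrderIsoOpens S).toOrderEmbedding.wellFoundedGT,
    fun _ => (sRadicalOrderIsoOpens S).symm.toOrderEmbedding.wellFoundedGT⟩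

end SZariski

theorem sZariski_noetherian_iff_acc_sRadical_general {R : Type*} [CommRing R]
    (S : Set R)
    (hS1 : (1 : R) ∈ S) (hSmul : ∀ s ∈ S, ∀ t ∈ S, s * t ∈ S) :
    @TopologicalSpace.NoetherianSpace (SSpec S) (sZariskiTop S) ↔
      ∀ c : ℕ →o Ideal R, (∀ n : ℕ, (c n : Set R) = SRad S (c n)) →
        ∃ N : ℕ, ∀ n : ℕ, N ≤ n → c n = c N := by
  obtain ⟨S, rfl⟩ : ∃ M : Submonoid R, (M : Set R) = S :=
    ⟨{ carrier := S, mul_mem' := fun ha hb => hSmul _ ha _ hb, one_mem' := hS1 }, rfl⟩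
  exact noetherianSpace_iff_wellFoundedGT_isSRadical.trans
    (wellFoundedGT_subtype_iff_monotone_chain_condition _)

/-- `Spec_S R` is noetherian with respect to the `S`-Zariski topology if and only if `R`
satisfies the ascending chain condition on `S`-radical ideals. -/
theorem sZariski_noetherian_iff_acc_sRadical {R : Type*} [CommRing R] [Nontrivial R]
    (S : Set R)
    (hS0 : (0 : R) ∉ S) (hS1 : (1 : R) ∈ S) (hSmul : ∀ s ∈ S, ∀ t ∈ S, s * t ∈ S) :
    @TopologicalSpace.NoetherianSpace (SSpec S) (sZariskiTop S) ↔
      ∀ c : ℕ →o Ideal R, (∀ n : ℕ, (c n : Set R) = SRad S (c n)) →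
        ∃ N : ℕ, ∀ n : ℕ, N ≤ n → c n = c N :=
  sZariski_noetherian_iff_acc_sRadical_general S hS1 hSmul
end

section
/- The map p ↦ Λ(p) is a bijection from the set of prime ideals of R disjoint from S (equivalently, the prime spectrum of the localization S⁻¹R) onto the set of nonempty irreducible closed subsets of Spec_S R with respect to the S-flat topology. Moreover, under this bijection, a prime ideal p disjoint from S is maximal among the prime ideals disjoint from S (equivalently, corresponds to a maximal ideal of S⁻¹R) if and only if Λ(p) is an irreducible component of Spec_S R with respect to the S-flat topology. -/
/-!
A point `P` of `Spec_S R` lies in `V_S(f)` exactly when `f` lies in its saturation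
`sat P = {a | ∃ s ∈ S, s * a ∈ P}`, a prime ideal disjoint from `S` (equal to `P` when `P` is
prime). As the `V_S(f)` form a subbasis, `Q` lies in the closure of `P` iff `sat Q ≤ sat P`; on
prime points the closure order is therefore inclusion of ideals, which gives injectivity and the
correspondence between maximal primes and irreducible components. An irreducible closed set `F`
has the generic point `⋃_{Q ∈ F} sat Q`: this union is an ideal because two sets `V_S(f)`,
`V_S(g)` meeting `F` meet inside `F`, and it lies in `F` because each of its subbasic
neighbourhoods meets `F`, which for irreducible `F` forces it into the closure of `F`.
-/

open TopologicalSpace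

theorem mem_closure_singleton_iff_of_eq_generateFrom {X : Type*} [t : TopologicalSpace X]
    {g : Set (Set X)} (ht : t = generateFrom g) {x y : X} :
    y ∈ closure {x} ↔ ∀ s ∈ g, y ∈ s → x ∈ s := by
  rw [← specializes_iff_mem_closure, Specializes, ← Filter.tendsto_id', ht,
    tendsto_nhds_generateFrom_iff]
  exact forall₂_congr fun s hs => imp_congr_right fun _ =>
    @IsOpen.mem_nhds_iff X (generateFrom g) _ _ (isOpen_generateFrom_of_mem hs)

theorem IsIrreducible.mem_closure_of_eq_generateFrom {X : Type*} [t : TopologicalSpace X]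
    {g : Set (Set X)} (ht : t = generateFrom g) {F : Set X} (hF : IsIrreducible F) {x : X}
    (hx : ∀ s ∈ g, x ∈ s → (F ∩ s).Nonempty) : x ∈ closure F := by
  rw [(isTopologicalBasis_of_subbasis ht).mem_closure_iff]
  rintro _ ⟨T, ⟨hT, hTg⟩, rfl⟩ hxT
  rw [Set.inter_comm]
  simpa using isIrreducible_iff_sInter.mp hF hT.toFinset
    (by simpa using fun u hu => ht ▸ isOpen_generateFrom_of_mem (hTg hu))
    (by simpa using fun u hu => hx u (hTg hu) (hxT u hu))

namespace Ideal

variable {R : Type*} [CommRing R] (M : Submonoid R)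

/-- `{a | ∃ m ∈ M, m * a ∈ I}`, obtained as the contraction of `I` from `M⁻¹R`. -/
def saturation (I : Ideal R) : Ideal R :=
  (I.map (algebraMap R (Localization M))).comap (algebraMap R (Localization M))

variable {M}

theorem mem_saturation {I : Ideal R} {a : R} : a ∈ I.saturation M ↔ ∃ m ∈ M, m * a ∈ I :=
  IsLocalization.algebraMap_mem_map_algebraMap_iff M (S := Localization M) I a

theorem saturation_eq_self {p : Ideal R} (hp : p.IsPrime) (hM : (p : Set R) ∩ M = ∅) :
    p.saturation M = p :=
  IsLocalization.under_map_of_isPrime_disjoint M _ hp (Set.disjoint_iff_inter_eq_empty.mpr hM).symm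

end Ideal

namespace SSpec

open Ideal

variable {R : Type*} [CommRing R] {M : Submonoid R}

attribute [local instance] sFlatTop

def ofIsPrime {p : Ideal R} (hp : p.IsPrime) (hM : (p : Set R) ∩ M = ∅) : SSpec (M : Set R) :=
  ⟨p, hM, 1, M.one_mem, fun a b hab => by simpa using hp.mem_or_mem hab⟩

theorem notMem_saturation (P : SSpec (M : Set R)) {m : R} (hm : m ∈ M) :
    m ∉ P.1.saturation M := by
  rw [mem_saturation]
  rintro ⟨n, hn, hnm⟩
  exact Set.eq_empty_iff_forall_notMem.mp P.2.1 _ ⟨hnm, M.mul_mem hn hm⟩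

theorem saturation_isPrime (P : SSpec (M : Set R)) : (P.1.saturation M).IsPrime := by
  obtain ⟨s, hs, hP⟩ := P.2.2
  refine ⟨(ne_top_iff_one _).mpr (P.notMem_saturation M.one_mem), ?_⟩
  simp only [mem_saturation]
  rintro a b ⟨m, hm, hab⟩
  rcases hP (m * a) b (by rwa [mul_assoc]) with h | h
  · exact Or.inl ⟨s * m, M.mul_mem hs hm, by rwa [mul_assoc]⟩
  · exact Or.inr ⟨s, hs, h⟩

theorem mem_sVar_span_singleton_iff {P : SSpec (M : Set R)} {f : R} :
    P ∈ SVar M (span {f}) ↔ f ∈ P.1.saturation M := by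
  change (∃ s ∈ M, ∀ x ∈ span {f}, s * x ∈ P.1) ↔ _
  rw [mem_saturation]
  refine exists_congr fun s => and_congr_right fun _ =>
    ⟨fun h => h f (mem_span_singleton_self f), fun h x hx => ?_⟩
  obtain ⟨c, rfl⟩ := mem_span_singleton'.mp hx
  simpa [mul_left_comm] using P.1.mul_mem_left c h

theorem isOpen_sVar_span_singleton (f : R) : IsOpen (SVar (M : Set R) (span {f})) :=
  isOpen_generateFrom_of_mem ⟨f, rfl⟩

theorem mem_closure_singleton_iff {P Q : SSpec (M : Set R)} :
    Q ∈ closure {P} ↔ Q.1.saturation M ≤ P.1.saturation M := by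
  refine (mem_closure_singleton_iff_of_eq_generateFrom rfl).trans ⟨fun h f hf => ?_, ?_⟩
  · exact mem_sVar_span_singleton_iff.mp (h _ ⟨f, rfl⟩ (mem_sVar_span_singleton_iff.mpr hf))
  · rintro h _ ⟨f, rfl⟩ hQ
    exact mem_sVar_span_singleton_iff.mpr (h (mem_sVar_span_singleton_iff.mp hQ))

theorem closure_singleton_subset_iff {p q : SSpec (M : Set R)} (hp : p.1.IsPrime)
    (hq : q.1.IsPrime) : closure {p} ⊆ closure {q} ↔ p.1 ≤ q.1 := by
  rw [← specializes_iff_closure_subset, specializes_iff_mem_closure, mem_closure_singleton_iff,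
    saturation_eq_self hp p.2.1, saturation_eq_self hq q.2.1]

section GenericPoint

variable {F : Set (SSpec (M : Set R))}

def genericIdeal (hF : IsIrreducible F) : Ideal R where
  carrier := {f | ∃ Q ∈ F, f ∈ Q.1.saturation M}
  zero_mem' := hF.nonempty.imp fun Q hQ => ⟨hQ, zero_mem _⟩
  add_mem' := by
    rintro f g ⟨Qf, hQf, hf⟩ ⟨Qg, hQg, hg⟩
    obtain ⟨Q, hQ, hfQ, hgQ⟩ := hF.2 _ _ (isOpen_sVar_span_singleton f)
      (isOpen_sVar_span_singleton g) ⟨Qf, hQf, mem_sVar_span_singleton_iff.mpr hf⟩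
      ⟨Qg, hQg, mem_sVar_span_singleton_iff.mpr hg⟩
    exact ⟨Q, hQ, add_mem (mem_sVar_span_singleton_iff.mp hfQ)
      (mem_sVar_span_singleton_iff.mp hgQ)⟩
  smul_mem' c := fun ⟨Q, hQ, hf⟩ => ⟨Q, hQ, mul_mem_left _ c hf⟩

theorem genericIdeal_isPrime (hF : IsIrreducible F) : (genericIdeal hF).IsPrime := by
  refine ⟨(ne_top_iff_one _).mpr fun ⟨Q, _, h⟩ => Q.notMem_saturation M.one_mem h, ?_⟩
  rintro a b ⟨Q, hQ, hab⟩
  exact ((saturation_isPrime Q).mem_or_mem hab).imp (⟨Q, hQ, ·⟩) (⟨Q, hQ, ·⟩)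

theorem genericIdeal_inter_eq_empty (hF : IsIrreducible F) :
    (genericIdeal hF : Set R) ∩ M = ∅ :=
  Set.eq_empty_iff_forall_notMem.mpr fun _ ⟨⟨Q, _, h⟩, hm⟩ => Q.notMem_saturation hm h

def genericPoint (hF : IsIrreducible F) : SSpec (M : Set R) :=
  ofIsPrime (genericIdeal_isPrime hF) (genericIdeal_inter_eq_empty hF)

theorem saturation_genericPoint (hF : IsIrreducible F) :
    (genericPoint hF).1.saturation M = genericIdeal hF :=
  saturation_eq_self (genericIdeal_isPrime hF) (genericIdeal_inter_eq_empty hF)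

theorem genericPoint_mem (hF : IsIrreducible F) (hF' : IsClosed F) : genericPoint hF ∈ F := by
  refine hF'.closure_subset (hF.mem_closure_of_eq_generateFrom rfl ?_)
  rintro _ ⟨f, rfl⟩ hf
  obtain ⟨Q, hQ, hfQ⟩ := saturation_genericPoint hF ▸ mem_sVar_span_singleton_iff.mp hf
  exact ⟨Q, hQ, mem_sVar_span_singleton_iff.mpr hfQ⟩

theorem closure_genericPoint (hF : IsIrreducible F) (hF' : IsClosed F) :
    closure {genericPoint hF} = F := by
  refine (closure_minimal (Set.singleton_subset_iff.mpr (genericPoint_mem hF hF')) hF').antisymm ?_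
  intro Q hQ
  rw [mem_closure_singleton_iff, saturation_genericPoint]
  exact fun f hf => ⟨Q, hQ, hf⟩

end GenericPoint

theorem isIrreducible_and_isClosed_iff {F : Set (SSpec (M : Set R))} :
    IsIrreducible F ∧ IsClosed F ↔
      ∃ p : {p : SSpec (M : Set R) // p.1.IsPrime}, F = closure {p.1} := by
  refine ⟨fun ⟨hF, hF'⟩ => ⟨⟨genericPoint hF, genericIdeal_isPrime hF⟩,
    (closure_genericPoint hF hF').symm⟩, ?_⟩
  rintro ⟨p, rfl⟩
  exact ⟨isIrreducible_singleton.closure, isClosed_closure⟩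

theorem injective_closure_singleton :
    Function.Injective fun p : {p : SSpec (M : Set R) // p.1.IsPrime} => closure {p.1} :=
  fun p q h => Subtype.ext <| Subtype.ext <|
    ((closure_singleton_subset_iff p.2 q.2).mp h.le).antisymm
      ((closure_singleton_subset_iff q.2 p.2).mp h.ge)

theorem closure_singleton_mem_irreducibleComponents_iff
    (p : {p : SSpec (M : Set R) // p.1.IsPrime}) :
    (∀ Q : Ideal R, Q.IsPrime → (Q : Set R) ∩ M = ∅ → p.1.1 ≤ Q → p.1.1 = Q) ↔
      closure {p.1} ∈ irreducibleComponents (SSpec (M : Set R)) := by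
  rw [irreducibleComponents_eq_maximals_closed]
  constructor
  · refine fun hmax => ⟨⟨isClosed_closure, isIrreducible_singleton.closure⟩, ?_⟩
    rintro _ ⟨hF', hF⟩ hpF
    obtain ⟨q, rfl⟩ := isIrreducible_and_isClosed_iff.mp ⟨hF, hF'⟩
    have hpq := hmax q.1.1 q.2 q.1.2.1 ((closure_singleton_subset_iff p.2 q.2).mp hpF)
    exact (closure_singleton_subset_iff q.2 p.2).mpr hpq.ge
  · intro hmax Q hQ hQM hpQ
    have hQp := hmax.2 ⟨isClosed_closure, isIrreducible_singleton.closure⟩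
      ((closure_singleton_subset_iff (q := ofIsPrime hQ hQM) p.2 hQ).mpr hpQ)
    exact hpQ.antisymm ((closure_singleton_subset_iff hQ p.2).mp hQp)

end SSpec

theorem sFlat_irreducible_closed_bijection_general {R : Type*} [CommRing R]
    (S : Set R)
    (hS1 : (1 : R) ∈ S) (hSmul : ∀ s ∈ S, ∀ t ∈ S, s * t ∈ S) :
    (Function.Injective fun p : {p : SSpec S // p.1.IsPrime} =>
        @closure (SSpec S) (sFlatTop S) {p.1}) ∧
    (∀ F : Set (SSpec S),
        (@IsIrreducible (SSpec S) (sFlatTop S) F ∧ @IsClosed (SSpec S) (sFlatTop S) F) ↔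
          ∃ p : {p : SSpec S // p.1.IsPrime},
            F = @closure (SSpec S) (sFlatTop S) {p.1}) ∧
    (∀ p : {p : SSpec S // p.1.IsPrime},
        (∀ Q : Ideal R, Q.IsPrime → (Q : Set R) ∩ S = ∅ → p.1.1 ≤ Q → p.1.1 = Q) ↔
          @closure (SSpec S) (sFlatTop S) {p.1} ∈
            @irreducibleComponents (SSpec S) (sFlatTop S)) := by
  obtain ⟨M, rfl⟩ : ∃ M : Submonoid R, (M : Set R) = S :=
    ⟨{ carrier := S, mul_mem' := fun ha hb => hSmul _ ha _ hb, one_mem' := hS1 }, rfl⟩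
  exact ⟨SSpec.injective_closure_singleton, fun _ => SSpec.isIrreducible_and_isClosed_iff,
    SSpec.closure_singleton_mem_irreducibleComponents_iff⟩

/-- The map `p ↦ Λ(p)` is a bijection from the set of prime ideals of `R` disjoint
from `S` onto the set of (nonempty) irreducible closed subsets of `Spec_S R` for the
`S`-flat topology; under this bijection, `p` is maximal among primes disjoint from `S`
iff `Λ(p)` is an irreducible component of `Spec_S R` for the `S`-flat topology. -/
theorem sFlat_irreducible_closed_bijection {R : Type*} [CommRing R] [Nontrivial R]
    (S : Set R)
    (hS0 : (0 : R) ∉ S) (hS1 : (1 : R) ∈ S) (hSmul : ∀ s ∈ S, ∀ t ∈ S, s * t ∈ S) :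
    (Function.Injective fun p : {p : SSpec S // p.1.IsPrime} =>
        @closure (SSpec S) (sFlatTop S) {p.1}) ∧
    (∀ F : Set (SSpec S),
        (@IsIrreducible (SSpec S) (sFlatTop S) F ∧ @IsClosed (SSpec S) (sFlatTop S) F) ↔
          ∃ p : {p : SSpec S // p.1.IsPrime},
            F = @closure (SSpec S) (sFlatTop S) {p.1}) ∧
    (∀ p : {p : SSpec S // p.1.IsPrime},
        (∀ Q : Ideal R, Q.IsPrime → (Q : Set R) ∩ S = ∅ → p.1.1 ≤ Q → p.1.1 = Q) ↔
          @closure (SSpec S) (sFlatTop S) {p.1} ∈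
            @irreducibleComponents (SSpec S) (sFlatTop S)) :=
  sFlat_irreducible_closed_bijection_general S hS1 hSmul
end

section
/- Suppose Spec_S R = C₁ ∪ C₂ with C₁ ∩ C₂ = ∅. The following statements are equivalent: (1) C₁ and C₂ are both closed with respect to the S-Zariski topology; (2) there exist f₁, f₂ ∈ R with C₁ = V_S(f₁), C₂ = V_S(f₂), f₁ + f₂ ∈ S, and f₁f₂ ∈ √[S]((0)); (3) C₁ and C₂ are both closed with respect to the S-flat topology. -/
/-!
Every `S`-prime `P` with witness `s ∈ S` determines the colon ideal `(P : s)`, a prime ideal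
disjoint from `S`, and `P ∈ V_S(I)` iff `I ⊆ (P : s)`. So `V_S(I)` is the preimage of `V(I)` under
`P ↦ (P : s)`, whose image is the set of primes disjoint from `S`, and both topologies on
`Spec_S R` are pulled back from `Spec R`: the `S`-Zariski topology from the Zariski topology, the
`S`-flat topology from the flat topology generated by the sets `V(f)`. These are open in the
constructible topology, in which the primes disjoint from `S` form a closed, hence compact, set;
so `Spec_S R` is compact for the `S`-flat topology. A set that is clopen for the `S`-flat topology
is then a finite union of finite intersections of sets `V_S(f)`, hence `S`-Zariski closed:
(3) ⇒ (1). For (1) ⇒ (2), write `C₁ = V_S(I)` and `C₂ = V_S(J)`; as `V_S(I + J)` is empty,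
`I + J` meets `S` in some `f₁ + f₂`, and then `Cᵢ = V_S(fᵢ)`, while `f₁ f₂` lies in every prime
disjoint from `S`.
-/

open Set TopologicalSpace Topology PrimeSpectrum

theorem IsCompact.isClosed_of_isOpen_generateFrom {X : Type*} (t : TopologicalSpace X)
    {b : Set (Set X)} (hb : ∀ s ∈ b, IsClosed[t] s) {C : Set X}
    (hc : @IsCompact X (generateFrom b) C) (ho : IsOpen[generateFrom b] C) : IsClosed[t] C := by
  have hbasis := isTopologicalBasis_of_subbasis (t := generateFrom b) rfl
  rw [image_eq_range] at hbasis
  obtain ⟨F, hF, rfl⟩ := @eq_finite_iUnion_of_isTopologicalBasis_of_isCompact_open _ _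
    (generateFrom b) _ hbasis C hc ho
  exact @Set.Finite.isClosed_biUnion _ _ t _ _ hF fun f _ =>
    @isClosed_sInter _ t _ fun s hs => hb s (f.2.2 hs)

namespace PrimeSpectrum

abbrev flatTopology (R : Type*) [CommRing R] : TopologicalSpace (PrimeSpectrum R) :=
  generateFrom (range fun f : R => zeroLocus {f})

variable {R : Type*} [CommRing R]

theorem isOpen_constructibleTopology_zeroLocus_singleton (f : R) :
    IsOpen[constructibleTopology (PrimeSpectrum R)] (zeroLocus {f}) :=
  IsCompact.isOpen_constructibleTopology_of_isClosed
    (by simpa only [basicOpen_eq_zeroLocus_compl] using isCompact_basicOpen f)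
    (isClosed_zeroLocus _)

theorem constructibleTopology_le_flatTopology :
    constructibleTopology (PrimeSpectrum R) ≤ flatTopology R :=
  le_generateFrom <| by
    rintro _ ⟨f, rfl⟩
    exact isOpen_constructibleTopology_zeroLocus_singleton f

theorem isCompact_constructibleTopology_setOf_disjoint (S : Set R) :
    @IsCompact _ (constructibleTopology _)
      {p : PrimeSpectrum R | Disjoint (p.asIdeal : Set R) S} := by
  have hcompact : @IsCompact _ (constructibleTopology _) (univ : Set (PrimeSpectrum R)) := by
    simpa only [image_univ_of_surjective (WithTopology.ofTopology_surjective _)] using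
      @IsCompact.image _ _ _ (constructibleTopology _) _ _
        (isCompact_univ (X := WithConstructibleTopology (PrimeSpectrum R)))
        (WithTopology.continuous_ofTopology _)
  have heq : {p : PrimeSpectrum R | Disjoint (p.asIdeal : Set R) S} =
      ⋂ s ∈ S, (zeroLocus {s})ᶜ := by
    ext p
    simp [Set.disjoint_right, mem_zeroLocus]
  let := constructibleTopology (PrimeSpectrum R)
  refine hcompact.of_isClosed_subset ?_ (subset_univ _)
  rw [heq]
  exact isClosed_biInter fun s _ =>
    (isOpen_constructibleTopology_zeroLocus_singleton s).isClosed_compl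

end PrimeSpectrum

theorem mem_SRad_zero_of_forall_isPrime {R : Type*} [CommRing R] {S : Submonoid R} {f : R}
    (h : ∀ p : Ideal R, p.IsPrime → Disjoint (p : Set R) S → f ∈ p) :
    f ∈ SRad S (0 : Ideal R) := by
  by_contra hf
  obtain ⟨p, hp, -, hpT⟩ := Ideal.exists_le_prime_disjoint ⊥ (S ⊔ Submonoid.powers f) <| by
    refine Set.disjoint_left.2 fun x hx hxT => hf ?_
    obtain ⟨s, hs, _, ⟨n, rfl⟩, rfl⟩ := Submonoid.mem_sup.1 hxT
    exact ⟨s, hs, n, hx⟩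
  exact Set.disjoint_left.1 hpT
    (h p hp (hpT.mono_right (SetLike.coe_subset_coe.2 le_sup_left)))
    (Submonoid.mem_sup_right (Submonoid.mem_powers f))

namespace SSpec

variable {R : Type*} [CommRing R] {S : Submonoid R}

theorem notMem_of_mem (P : SSpec (S : Set R)) {s : R} (hs : s ∈ S) : s ∉ P.1 :=
  fun hsP => (Set.eq_empty_iff_forall_notMem.mp P.2.1) s ⟨hsP, hs⟩

noncomputable def witness (P : SSpec (S : Set R)) : R := P.2.2.choose

theorem witness_mem (P : SSpec (S : Set R)) : witness P ∈ S := P.2.2.choose_spec.1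

theorem witness_mul_mem_or {P : SSpec (S : Set R)} {a b : R} (h : a * b ∈ P.1) :
    witness P * a ∈ P.1 ∨ witness P * b ∈ P.1 :=
  P.2.2.choose_spec.2 a b h

theorem witness_mul_mem_of_mul_mem {P : SSpec (S : Set R)} {u a : R} (hu : u ∈ S)
    (h : u * a ∈ P.1) : witness P * a ∈ P.1 :=
  (witness_mul_mem_or h).resolve_left (notMem_of_mem P (S.mul_mem (witness_mem P) hu))

theorem isPrime_comap_mulLeft_witness (P : SSpec (S : Set R)) :
    Ideal.IsPrime (Submodule.comap (LinearMap.mulLeft R (witness P)) P.1) := by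
  refine Ideal.isPrime_iff.2 ⟨(Ideal.ne_top_iff_one _).2 fun h => ?_, fun {a b} hab => ?_⟩
  · exact notMem_of_mem P (witness_mem P) (by simpa using h)
  · have hab : witness P * a * b ∈ P.1 := by simpa [mul_assoc] using hab
    refine (witness_mul_mem_or hab).imp_left fun h => ?_
    -- `s * (s * a) ∈ P` already forces `s * a ∈ P`, because `s * s ∈ S`
    exact witness_mul_mem_of_mul_mem (S.mul_mem (witness_mem P) (witness_mem P))
      (by simpa [mul_assoc] using h)

noncomputable def toPrimeSpectrum (P : SSpec (S : Set R)) : PrimeSpectrum R :=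
  ⟨_, isPrime_comap_mulLeft_witness P⟩

theorem disjoint_toPrimeSpectrum (P : SSpec (S : Set R)) :
    Disjoint ((toPrimeSpectrum P).asIdeal : Set R) S :=
  Set.disjoint_right.2 fun _ hs h => notMem_of_mem P (S.mul_mem (witness_mem P) hs) h

theorem mem_SVar_iff {P : SSpec (S : Set R)} {I : Ideal R} :
    P ∈ SVar S I ↔ I ≤ (toPrimeSpectrum P).asIdeal :=
  ⟨fun ⟨_, hu, h⟩ a ha => witness_mul_mem_of_mul_mem hu (h a ha),
    fun h => ⟨witness P, witness_mem P, h⟩⟩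

theorem SVar_eq_preimage (I : Ideal R) :
    SVar S I = toPrimeSpectrum ⁻¹' zeroLocus I := by
  ext P
  exact mem_SVar_iff

def ofPrimeSpectrum (p : PrimeSpectrum R) (hp : Disjoint (p.asIdeal : Set R) S) :
    SSpec (S : Set R) :=
  ⟨p.asIdeal, Set.disjoint_iff_inter_eq_empty.1 hp, 1, S.one_mem, fun a b h => by
    simpa using p.2.mem_or_mem h⟩

theorem toPrimeSpectrum_ofPrimeSpectrum (p : PrimeSpectrum R)
    (hp : Disjoint (p.asIdeal : Set R) S) : toPrimeSpectrum (ofPrimeSpectrum p hp) = p := by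
  ext a
  refine ⟨fun h => ?_, fun h => Ideal.mul_mem_left _ _ h⟩
  exact (p.2.mem_or_mem h).resolve_left (Set.disjoint_right.1 hp (witness_mem _))

theorem range_toPrimeSpectrum :
    Set.range (toPrimeSpectrum (S := S)) = {p | Disjoint (p.asIdeal : Set R) S} :=
  Set.Subset.antisymm (Set.range_subset_iff.2 disjoint_toPrimeSpectrum)
    fun p hp => ⟨ofPrimeSpectrum p hp, toPrimeSpectrum_ofPrimeSpectrum p hp⟩

theorem ofPrimeSpectrum_mem_SVar_iff {p : PrimeSpectrum R}
    {hp : Disjoint (p.asIdeal : Set R) S} {I : Ideal R} :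
    ofPrimeSpectrum p hp ∈ SVar S I ↔ I ≤ p.asIdeal := by
  rw [mem_SVar_iff, toPrimeSpectrum_ofPrimeSpectrum]

theorem SVar_span_singleton (f : R) :
    SVar S (Ideal.span {f}) = toPrimeSpectrum ⁻¹' zeroLocus {f} := by
  rw [SVar_eq_preimage, zeroLocus_span]

theorem SVar_anti {I J : Ideal R} (h : I ≤ J) : SVar S J ⊆ SVar S I := by
  simpa only [SVar_eq_preimage] using preimage_mono (zeroLocus_anti_mono_ideal h)

theorem SVar_sup (I J : Ideal R) : SVar S (I ⊔ J) = SVar S I ∩ SVar S J := by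
  simp only [SVar_eq_preimage, zeroLocus_sup, preimage_inter]

theorem SVar_span_singleton_mul (f g : R) :
    SVar S (Ideal.span {f * g}) = SVar S (Ideal.span {f}) ∪ SVar S (Ideal.span {g}) := by
  simp only [SVar_span_singleton, zeroLocus_singleton_mul, preimage_union]

theorem SVar_eq_empty_iff {I : Ideal R} : SVar S I = ∅ ↔ ∃ s ∈ S, s ∈ I := by
  refine ⟨fun h => ?_, fun ⟨s, hsS, hsI⟩ => eq_empty_of_forall_notMem fun P hP =>
    Set.disjoint_right.1 (disjoint_toPrimeSpectrum P) hsS (mem_SVar_iff.1 hP hsI)⟩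
  by_contra! hI
  obtain ⟨p, hp, hIp, hpS⟩ := Ideal.exists_le_prime_disjoint I S
    (Set.disjoint_right.2 fun s hs hsI => hI s hs hsI)
  exact eq_empty_iff_forall_notMem.1 h (ofPrimeSpectrum ⟨p, hp⟩ hpS)
    (ofPrimeSpectrum_mem_SVar_iff.2 hIp)

theorem mem_SRad_zero_of_SVar_eq_univ {f : R} (h : SVar S (Ideal.span {f}) = univ) :
    f ∈ SRad S (0 : Ideal R) :=
  mem_SRad_zero_of_forall_isPrime fun p hp hpS =>
    (Ideal.span_singleton_le_iff_mem p).1 <|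
      ofPrimeSpectrum_mem_SVar_iff.1 (h ▸ mem_univ (ofPrimeSpectrum ⟨p, hp⟩ hpS))

theorem exists_span_singleton_of_SVar_eq_compl {C : Set (SSpec (S : Set R))} {I J : Ideal R}
    (hI : SVar S I = C) (hJ : SVar S J = Cᶜ) :
    ∃ f₁ f₂ : R, C = SVar S (Ideal.span {f₁}) ∧ Cᶜ = SVar S (Ideal.span {f₂}) ∧
      f₁ + f₂ ∈ S ∧ f₁ * f₂ ∈ SRad S (0 : Ideal R) := by
  obtain ⟨s, hsS, hs⟩ :=
    (SVar_eq_empty_iff (I := I ⊔ J)).1 (by rw [SVar_sup, hI, hJ, inter_compl_self])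
  obtain ⟨a, ha, b, hb, rfl⟩ := Submodule.mem_sup.1 hs
  have hCa : C ⊆ SVar S (Ideal.span {a}) :=
    hI ▸ SVar_anti ((Ideal.span_singleton_le_iff_mem _).2 ha)
  have hCb : Cᶜ ⊆ SVar S (Ideal.span {b}) :=
    hJ ▸ SVar_anti ((Ideal.span_singleton_le_iff_mem _).2 hb)
  have hab : Disjoint (SVar S (Ideal.span {a})) (SVar S (Ideal.span {b})) := by
    rw [Set.disjoint_iff_inter_eq_empty, ← SVar_sup, SVar_eq_empty_iff]
    exact ⟨a + b, hsS, add_mem (Ideal.mem_sup_left (Ideal.mem_span_singleton_self a))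
      (Ideal.mem_sup_right (Ideal.mem_span_singleton_self b))⟩
  have hCa' : C = SVar S (Ideal.span {a}) :=
    hCa.antisymm fun P hPa => not_not.1 fun hPC => Set.disjoint_left.1 hab hPa (hCb hPC)
  have hCb' : Cᶜ = SVar S (Ideal.span {b}) :=
    hCb.antisymm fun P hPb hPC => Set.disjoint_left.1 hab (hCa hPC) hPb
  refine ⟨a, b, hCa', hCb', hsS, mem_SRad_zero_of_SVar_eq_univ ?_⟩
  rw [SVar_span_singleton_mul, ← hCa', ← hCb', union_compl_self]

theorem sZariskiTop_eq_induced :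
    sZariskiTop (S : Set R) = .induced toPrimeSpectrum zariskiTopology := by
  refine le_antisymm (fun U hU => ?_) (le_generateFrom ?_)
  · obtain ⟨Z, hZ, rfl⟩ := isOpen_induced_iff.1 hU
    obtain ⟨I, hI⟩ := (isClosed_iff_zeroLocus_ideal Zᶜ).1 hZ.isClosed_compl
    refine isOpen_generateFrom_of_mem ⟨I, ?_⟩
    rw [SVar_eq_preimage, ← hI, preimage_compl, compl_compl]
  · rintro _ ⟨I, rfl⟩
    rw [SVar_eq_preimage, ← preimage_compl]
    exact isOpen_induced (isClosed_zeroLocus _).isOpen_compl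

theorem isClosed_sZariskiTop_iff {C : Set (SSpec (S : Set R))} :
    IsClosed[sZariskiTop (S : Set R)] C ↔ ∃ I : Ideal R, SVar S I = C := by
  rw [sZariskiTop_eq_induced, isClosed_induced_iff]
  simp [isClosed_iff_zeroLocus_ideal, SVar_eq_preimage]

theorem sFlatTop_eq_induced :
    sFlatTop (S : Set R) = .induced toPrimeSpectrum (flatTopology R) := by
  rw [induced_generateFrom_eq, ← range_comp]
  refine congrArg generateFrom (Set.ext fun U => ?_)
  simp [SVar_span_singleton, eq_comm]

theorem compactSpace_sFlatTop : @CompactSpace (SSpec (S : Set R)) (sFlatTop (S : Set R)) := by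
  let := sFlatTop (S : Set R)
  have hπ : @IsInducing _ _ (sFlatTop (S : Set R)) (flatTopology R) toPrimeSpectrum :=
    @IsInducing.mk _ _ _ (flatTopology R) _ sFlatTop_eq_induced
  refine ⟨(@IsInducing.isCompact_iff _ _ _ (flatTopology R) _ _ hπ).2 ?_⟩
  rw [image_univ, range_toPrimeSpectrum]
  simpa only [image_id] using
    @IsCompact.image _ _ (constructibleTopology _) (flatTopology R) _ _
      (isCompact_constructibleTopology_setOf_disjoint _)
    (continuous_id_of_le constructibleTopology_le_flatTopology)

theorem isClosed_sFlatTop_of_compl_eq_SVar {C : Set (SSpec (S : Set R))} {f : R}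
    (h : Cᶜ = SVar S (Ideal.span {f})) : IsClosed[sFlatTop (S : Set R)] C :=
  @IsClosed.mk _ (sFlatTop _) _ (h ▸ isOpen_generateFrom_of_mem ⟨f, rfl⟩)

theorem isClosed_sZariskiTop_of_isClosed_of_isOpen_sFlatTop {C : Set (SSpec (S : Set R))}
    (hc : IsClosed[sFlatTop (S : Set R)] C) (ho : IsOpen[sFlatTop (S : Set R)] C) :
    IsClosed[sZariskiTop (S : Set R)] C := by
  let := sFlatTop (S : Set R)
  have := compactSpace_sFlatTop (S := S)
  refine IsCompact.isClosed_of_isOpen_generateFrom _ ?_ hc.isCompact ho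
  rintro _ ⟨f, rfl⟩
  exact isClosed_sZariskiTop_iff.2 ⟨_, rfl⟩

end SSpec

theorem sSpec_partition_tfae_general {R : Type*} [CommRing R] (S : Set R)
    (hS1 : (1 : R) ∈ S) (hSmul : ∀ s ∈ S, ∀ t ∈ S, s * t ∈ S)
    (C₁ C₂ : Set (SSpec S)) (hunion : C₁ ∪ C₂ = Set.univ) (hdisj : C₁ ∩ C₂ = ∅) :
    List.TFAE
      [@IsClosed (SSpec S) (sZariskiTop S) C₁ ∧ @IsClosed (SSpec S) (sZariskiTop S) C₂,
       ∃ f₁ f₂ : R, C₁ = SVar S (Ideal.span {f₁}) ∧ C₂ = SVar S (Ideal.span {f₂}) ∧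
         f₁ + f₂ ∈ S ∧ f₁ * f₂ ∈ SRad S (0 : Ideal R),
       @IsClosed (SSpec S) (sFlatTop S) C₁ ∧ @IsClosed (SSpec S) (sFlatTop S) C₂] := by
  obtain ⟨S, rfl⟩ : ∃ M : Submonoid R, (M : Set R) = S :=
    ⟨⟨⟨S, fun ha hb => hSmul _ ha _ hb⟩, hS1⟩, rfl⟩
  obtain rfl : C₂ = C₁ᶜ := (IsCompl.compl_eq ⟨Set.disjoint_iff_inter_eq_empty.2 hdisj,
    codisjoint_iff.2 hunion⟩).symm
  tfae_have 1 → 2 := fun ⟨h₁, h₂⟩ => by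
    obtain ⟨I, hI⟩ := SSpec.isClosed_sZariskiTop_iff.1 h₁
    obtain ⟨J, hJ⟩ := SSpec.isClosed_sZariskiTop_iff.1 h₂
    exact SSpec.exists_span_singleton_of_SVar_eq_compl hI hJ
  tfae_have 2 → 1 := fun ⟨f₁, f₂, h₁, h₂, _⟩ =>
    ⟨SSpec.isClosed_sZariskiTop_iff.2 ⟨_, h₁.symm⟩,
      SSpec.isClosed_sZariskiTop_iff.2 ⟨_, h₂.symm⟩⟩
  tfae_have 2 → 3 := fun ⟨f₁, f₂, h₁, h₂, _⟩ =>
    ⟨SSpec.isClosed_sFlatTop_of_compl_eq_SVar h₂,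
      SSpec.isClosed_sFlatTop_of_compl_eq_SVar ((compl_compl C₁).trans h₁)⟩
  tfae_have 3 → 1 := fun ⟨h₁, h₂⟩ =>
    ⟨SSpec.isClosed_sZariskiTop_of_isClosed_of_isOpen_sFlatTop h₁
        (compl_compl C₁ ▸ h₂.isOpen_compl),
      SSpec.isClosed_sZariskiTop_of_isClosed_of_isOpen_sFlatTop h₂ h₁.isOpen_compl⟩
  tfae_finish

/-- For a partition `Spec_S R = C₁ ∪ C₂`, `C₁ ∩ C₂ = ∅`, TFAE:
(1) `C₁, C₂` are `S`-Zariski closed;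
(2) `Cᵢ = V_S(fᵢ)` with `f₁ + f₂ ∈ S` and `f₁f₂ ∈ √[S](0)`;
(3) `C₁, C₂` are `S`-flat closed. -/
theorem sSpec_partition_tfae {R : Type*} [CommRing R] [Nontrivial R] (S : Set R)
    (hS0 : (0 : R) ∉ S) (hS1 : (1 : R) ∈ S) (hSmul : ∀ s ∈ S, ∀ t ∈ S, s * t ∈ S)
    (C₁ C₂ : Set (SSpec S)) (hunion : C₁ ∪ C₂ = Set.univ) (hdisj : C₁ ∩ C₂ = ∅) :
    List.TFAE
      [@IsClosed (SSpec S) (sZariskiTop S) C₁ ∧ @IsClosed (SSpec S) (sZariskiTop S) C₂,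
       ∃ f₁ f₂ : R, C₁ = SVar S (Ideal.span {f₁}) ∧ C₂ = SVar S (Ideal.span {f₂}) ∧
         f₁ + f₂ ∈ S ∧ f₁ * f₂ ∈ SRad S (0 : Ideal R),
       @IsClosed (SSpec S) (sFlatTop S) C₁ ∧ @IsClosed (SSpec S) (sFlatTop S) C₂] :=
  sSpec_partition_tfae_general S hS1 hSmul C₁ C₂ hunion hdisj
end
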